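/- For any c > 0, the rational function q(x,t) = c - 4c / (1 + (2cx - 12c³t)²) is a smooth solution of the MKdV equation q_t + 6q²q_x + q_{xxx} = 0 on ℝ × ℝ. -/

import Mathlib

private lemma denom_ne (s : ℝ) : 1 + s ^ 2 ≠ 0 := by positivity

private lemma hs_x (c t x : ℝ) :
    HasDerivAt (fun x' : ℝ => 2 * c * x' - 12 * c ^ 3 * t) (2 * c) x := by
  simpa using ((hasDerivAt_id x).const_mul (2 * c)).sub_const (12 * c ^ 3 * t)

private lemma hs_t (c x t : ℝ) :
    HasDerivAt (fun t' : ℝ => 2 * c * x - 12 * c ^ 3 * t') (-(12 * c ^ 3)) t := by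
  simpa using (((hasDerivAt_id t).const_mul (12 * c ^ 3)).const_sub (2 * c * x))

private lemma L1 (c t x : ℝ) :
    HasDerivAt (fun x' => c - 4 * c / (1 + (2 * c * x' - 12 * c ^ 3 * t) ^ 2))
      (16 * c ^ 2 * (2 * c * x - 12 * c ^ 3 * t) /
        (1 + (2 * c * x - 12 * c ^ 3 * t) ^ 2) ^ 2) x := by
  set s := 2 * c * x - 12 * c ^ 3 * t with hsdef
  have hden : HasDerivAt (fun x' : ℝ => 1 + (2 * c * x' - 12 * c ^ 3 * t) ^ 2)
      (2 * s ^ 1 * (2 * c)) x := (((hs_x c t x).pow 2).const_add 1)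
  have h := ((hasDerivAt_const x (4 * c)).div hden (denom_ne s)).const_sub c
  refine h.congr_deriv ?_
  field_simp
  ring

private lemma Lt (c x t : ℝ) :
    HasDerivAt (fun t' => c - 4 * c / (1 + (2 * c * x - 12 * c ^ 3 * t') ^ 2))
      (-(96 * c ^ 4) * (2 * c * x - 12 * c ^ 3 * t) /
        (1 + (2 * c * x - 12 * c ^ 3 * t) ^ 2) ^ 2) t := by
  set s := 2 * c * x - 12 * c ^ 3 * t with hsdef
  have hden : HasDerivAt (fun t' : ℝ => 1 + (2 * c * x - 12 * c ^ 3 * t') ^ 2)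
      (2 * s ^ 1 * -(12 * c ^ 3)) t := (((hs_t c x t).pow 2).const_add 1)
  have h := ((hasDerivAt_const t (4 * c)).div hden (denom_ne s)).const_sub c
  refine h.congr_deriv ?_
  field_simp
  ring

private lemma L2 (c t x : ℝ) :
    HasDerivAt (fun x' => 16 * c ^ 2 * (2 * c * x' - 12 * c ^ 3 * t) /
        (1 + (2 * c * x' - 12 * c ^ 3 * t) ^ 2) ^ 2)
      (32 * c ^ 3 * (1 - 3 * (2 * c * x - 12 * c ^ 3 * t) ^ 2) /
        (1 + (2 * c * x - 12 * c ^ 3 * t) ^ 2) ^ 3) x := by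
  set s := 2 * c * x - 12 * c ^ 3 * t with hsdef
  have hnum : HasDerivAt (fun x' : ℝ => 16 * c ^ 2 * (2 * c * x' - 12 * c ^ 3 * t))
      (16 * c ^ 2 * (2 * c)) x := (hs_x c t x).const_mul _
  have hden : HasDerivAt (fun x' : ℝ => (1 + (2 * c * x' - 12 * c ^ 3 * t) ^ 2) ^ 2)
      (2 * (1 + s ^ 2) ^ 1 * (2 * s ^ 1 * (2 * c))) x :=
    ((((hs_x c t x).pow 2).const_add 1).pow 2)
  have hne : (1 + s ^ 2) ^ 2 ≠ 0 := pow_ne_zero _ (denom_ne s)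
  have h := hnum.div hden hne
  refine h.congr_deriv ?_
  have h1 : 1 + s ^ 2 ≠ 0 := denom_ne s
  field_simp
  ring

private lemma L3 (c t x : ℝ) :
    HasDerivAt (fun x' => 32 * c ^ 3 * (1 - 3 * (2 * c * x' - 12 * c ^ 3 * t) ^ 2) /
        (1 + (2 * c * x' - 12 * c ^ 3 * t) ^ 2) ^ 3)
      (768 * c ^ 4 * (2 * c * x - 12 * c ^ 3 * t) *
          ((2 * c * x - 12 * c ^ 3 * t) ^ 2 - 1) /
        (1 + (2 * c * x - 12 * c ^ 3 * t) ^ 2) ^ 4) x := by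
  set s := 2 * c * x - 12 * c ^ 3 * t with hsdef
  have hnum : HasDerivAt (fun x' : ℝ => 32 * c ^ 3 * (1 - 3 * (2 * c * x' - 12 * c ^ 3 * t) ^ 2))
      (32 * c ^ 3 * -(3 * (2 * s ^ 1 * (2 * c)))) x :=
    ((((hs_x c t x).pow 2).const_mul 3).const_sub 1).const_mul _
  have hden : HasDerivAt (fun x' : ℝ => (1 + (2 * c * x' - 12 * c ^ 3 * t) ^ 2) ^ 3)
      (3 * (1 + s ^ 2) ^ 2 * (2 * s ^ 1 * (2 * c))) x :=
    ((((hs_x c t x).pow 2).const_add 1).pow 3)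
  have hne : (1 + s ^ 2) ^ 3 ≠ 0 := pow_ne_zero _ (denom_ne s)
  have h := hnum.div hden hne
  refine h.congr_deriv ?_
  have h1 : 1 + s ^ 2 ≠ 0 := denom_ne s
  field_simp
  ring

/-- The rational antisoliton on background `c`:
`q(x,t) = c - 4c/(1 + (2cx - 12c³t)²)` is a smooth solution of MKdV. -/
theorem rational_antisoliton_solves_mkdv (c : ℝ) (hc : 0 < c) :
    ContDiff ℝ (⊤ : ℕ∞) (fun p : ℝ × ℝ =>
      c - 4 * c / (1 + (2 * c * p.1 - 12 * c ^ 3 * p.2) ^ 2)) ∧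
    ∀ x t : ℝ,
      deriv (fun t' => c - 4 * c / (1 + (2 * c * x - 12 * c ^ 3 * t') ^ 2)) t
        + 6 * (c - 4 * c / (1 + (2 * c * x - 12 * c ^ 3 * t) ^ 2)) ^ 2 *
            deriv (fun x' => c - 4 * c / (1 + (2 * c * x' - 12 * c ^ 3 * t) ^ 2)) x
        + iteratedDeriv 3 (fun x' => c - 4 * c / (1 + (2 * c * x' - 12 * c ^ 3 * t) ^ 2)) x
      = 0 := by
  constructor
  · have hden : ContDiff ℝ (⊤ : ℕ∞) (fun p : ℝ × ℝ => 1 + (2 * c * p.1 - 12 * c ^ 3 * p.2) ^ 2) := by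
      fun_prop
    exact contDiff_const.sub
      (contDiff_const.div hden (fun p => denom_ne _))
  · intro x t
    have e1 : deriv (fun x' => c - 4 * c / (1 + (2 * c * x' - 12 * c ^ 3 * t) ^ 2))
        = fun x' => 16 * c ^ 2 * (2 * c * x' - 12 * c ^ 3 * t) /
            (1 + (2 * c * x' - 12 * c ^ 3 * t) ^ 2) ^ 2 :=
      funext fun y => (L1 c t y).deriv
    have e2 : deriv (fun x' => 16 * c ^ 2 * (2 * c * x' - 12 * c ^ 3 * t) /
            (1 + (2 * c * x' - 12 * c ^ 3 * t) ^ 2) ^ 2)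
        = fun x' => 32 * c ^ 3 * (1 - 3 * (2 * c * x' - 12 * c ^ 3 * t) ^ 2) /
            (1 + (2 * c * x' - 12 * c ^ 3 * t) ^ 2) ^ 3 :=
      funext fun y => (L2 c t y).deriv
    have e3 : iteratedDeriv 3 (fun x' => c - 4 * c / (1 + (2 * c * x' - 12 * c ^ 3 * t) ^ 2)) x
        = 768 * c ^ 4 * (2 * c * x - 12 * c ^ 3 * t) *
            ((2 * c * x - 12 * c ^ 3 * t) ^ 2 - 1) /
          (1 + (2 * c * x - 12 * c ^ 3 * t) ^ 2) ^ 4 := by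
      rw [iteratedDeriv_succ, iteratedDeriv_succ,
        iteratedDeriv_succ, iteratedDeriv_zero, e1, e2]
      exact (L3 c t x).deriv
    rw [e3, (Lt c x t).deriv, e1]
    set s := 2 * c * x - 12 * c ^ 3 * t with hsdef
    have h1 : 1 + s ^ 2 ≠ 0 := denom_ne s
    field_simp
    ring
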